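/- Let d ≥ 1, 1 < p < 1 + 4/d and h > 0. Then for all m > 0 and m' > 0, E_min(m + m', h) < E_min(m, h) + E_min(m', h). -/

import Mathlib

open MeasureTheory Filter Topology
open scoped ENNReal

noncomputable section

/-- The lattice `ℤ^d`. -/
abbrev ZLat (d : ℕ) := Fin d → ℤ

/-- Mass of `v : ℤ^d → ℂ` at grid size `h`:  `M_h(v) = h^d ∑_x |v x|²`. -/
def massZ (d : ℕ) (h : ℝ) (v : ZLat d → ℂ) : ℝ :=
  h ^ d * ∑' x : ZLat d, ‖v x‖ ^ 2

/-- Gradient term `G_h(v) = (h^{d-2}/2) ∑_{x∼y} |v x - v y|²`, the sum being over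
ordered pairs of neighbours, grouped here by `x` and the `2d` neighbours `x ± eᵢ`. -/
def gradZ (d : ℕ) (h : ℝ) (v : ZLat d → ℂ) : ℝ :=
  h ^ d / h ^ 2 / 2 *
    ∑' x : ZLat d, ∑ i : Fin d,
      (‖v (x + Pi.single i 1) - v x‖ ^ 2 + ‖v (x - Pi.single i 1) - v x‖ ^ 2)

/-- Nonlinear term `N_h(v) = (h^d/(p+1)) ∑_x |v x|^{p+1}`. -/
def nonlinZ (d : ℕ) (p h : ℝ) (v : ZLat d → ℂ) : ℝ :=
  h ^ d / (p + 1) * ∑' x : ZLat d, ‖v x‖ ^ (p + 1)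

/-- Energy `H_h(v) = G_h(v) - N_h(v)`. -/
def energyZ (d : ℕ) (p h : ℝ) (v : ZLat d → ℂ) : ℝ :=
  gradZ d h v - nonlinZ d p h v

/-- `ℓ²(ℤ^d)`. -/
def ell2 (d : ℕ) : Set (ZLat d → ℂ) := {v | Summable fun x => ‖v x‖ ^ 2}

/-- `E_min(m,h) = inf {H_h(v) : v ∈ ℓ²(ℤ^d), M_h(v) = m}`. -/
def Emin (d : ℕ) (p h m : ℝ) : ℝ :=
  sInf (energyZ d p h '' {v ∈ ell2 d | massZ d h v = m})

/-!
Replacing `v` by `√θ • v` multiplies the mass and the gradient term by `θ` and the nonlinear term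
by `θ^((p+1)/2)`, so `E_min(θm) ≤ θ^((p+1)/2) E_min(m)` for `θ ≥ 1`. As soon as `E_min(m) < 0` this
gives `E_min(θm) < θ E_min(m)` for `θ > 1`, and strict subadditivity follows from the cases
`θ = (m+m')/m` and `θ = (m+m')/m'`. Negativity comes from tensor powers of a tent of width `L`
normalised to mass `m`: their gradient term is of order `L^(-2)` while their nonlinear term is of
order `L^(-d(p-1)/2)`, which wins for large `L` exactly when `p < 1 + 4/d`. The infimum is finite
because `∑ |v|^(p+1) ≤ (∑ |v|^2)^((p+1)/2)`.
-/
open Finset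

section Scaling

variable {d : ℕ} {p h : ℝ}

lemma norm_smul_sq {E : Type*} [SeminormedAddCommGroup E] [NormedSpace ℝ E] (a : ℝ) (z : E) :
    ‖a • z‖ ^ 2 = a ^ 2 * ‖z‖ ^ 2 := by
  rw [norm_smul, mul_pow, Real.norm_eq_abs, sq_abs]

lemma smul_mem_ell2 {v : ZLat d → ℂ} (a : ℝ) (hv : v ∈ ell2 d) : a • v ∈ ell2 d := by
  simpa only [ell2, Set.mem_ofPred_eq, Pi.smul_apply, norm_smul_sq] using hv.mul_left (a ^ 2)

lemma massZ_smul (a : ℝ) (v : ZLat d → ℂ) : massZ d h (a • v) = a ^ 2 * massZ d h v := by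
  simp only [massZ, Pi.smul_apply, norm_smul_sq, tsum_mul_left]
  ring

lemma gradZ_smul (a : ℝ) (v : ZLat d → ℂ) : gradZ d h (a • v) = a ^ 2 * gradZ d h v := by
  simp only [gradZ, Pi.smul_apply, ← smul_sub, norm_smul_sq, ← mul_add, ← mul_sum,
    tsum_mul_left]
  ring

lemma nonlinZ_smul {a : ℝ} (ha : 0 ≤ a) (v : ZLat d → ℂ) :
    nonlinZ d p h (a • v) = a ^ (p + 1) * nonlinZ d p h v := by
  simp only [nonlinZ, Pi.smul_apply, norm_smul, Real.norm_of_nonneg ha,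
    Real.mul_rpow ha (norm_nonneg _), tsum_mul_left]
  ring

lemma energyZ_smul {a : ℝ} (ha : 0 ≤ a) (v : ZLat d → ℂ) :
    energyZ d p h (a • v) = a ^ 2 * gradZ d h v - a ^ (p + 1) * nonlinZ d p h v := by
  rw [energyZ, gradZ_smul, nonlinZ_smul ha]

lemma gradZ_nonneg (hh : 0 ≤ h) (v : ZLat d → ℂ) : 0 ≤ gradZ d h v :=
  mul_nonneg (by positivity) (tsum_nonneg fun _ => sum_nonneg fun _ _ => by positivity)

end Scaling

lemma tsum_rpow_le_rpow_tsum_sq {α : Type*} {f : α → ℝ} {q : ℝ} (hq : 2 ≤ q)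
    (hf0 : ∀ x, 0 ≤ f x) (hf : Summable fun x => f x ^ 2) :
    ∑' x, f x ^ q ≤ (∑' x, f x ^ 2) ^ (q / 2) := by
  set S := ∑' x, f x ^ 2
  have hS : 0 ≤ S := tsum_nonneg fun x => sq_nonneg _
  have hpt : ∀ x, f x ^ q ≤ S ^ ((q - 2) / 2) * f x ^ 2 := by
    intro x
    have hsq : f x ^ 2 ≤ S := hf.le_tsum x fun y _ => sq_nonneg _
    calc f x ^ q = (f x ^ 2) ^ ((q - 2) / 2) * f x ^ 2 := by
          rw [← Real.rpow_natCast, ← Real.rpow_mul (hf0 x), ← Real.rpow_add' (hf0 x)] <;>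
            [ring_nf; (push_cast; linarith)]
      _ ≤ S ^ ((q - 2) / 2) * f x ^ 2 := by gcongr
  calc ∑' x, f x ^ q ≤ ∑' x, S ^ ((q - 2) / 2) * f x ^ 2 :=
        Summable.tsum_le_tsum hpt
          ((hf.mul_left _).of_nonneg_of_le (fun x => Real.rpow_nonneg (hf0 x) _) hpt)
          (hf.mul_left _)
    _ = S ^ ((q - 2) / 2) * S ^ (1 : ℝ) := by rw [tsum_mul_left, Real.rpow_one]
    _ = S ^ (q / 2) := by rw [← Real.rpow_add' hS (by linarith)]; ring_nf

section MinimalEnergy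

variable {d : ℕ} {p h m : ℝ}

lemma nonlinZ_le (hp : 1 ≤ p) (hh : 0 < h) {v : ZLat d → ℂ} (hv : v ∈ ell2 d) :
    nonlinZ d p h v ≤ h ^ d / (p + 1) * (massZ d h v / h ^ d) ^ ((p + 1) / 2) := by
  have hmass : massZ d h v / h ^ d = ∑' x, ‖v x‖ ^ 2 := by
    rw [massZ, mul_div_cancel_left₀ _ (pow_pos hh d).ne']
  rw [nonlinZ, hmass]
  gcongr
  exact tsum_rpow_le_rpow_tsum_sq (by linarith) (fun x => norm_nonneg _) hv

lemma bddBelow_energyZ_image (hp : 1 ≤ p) (hh : 0 < h) :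
    BddBelow (energyZ d p h '' {v ∈ ell2 d | massZ d h v = m}) := by
  refine ⟨-(h ^ d / (p + 1) * (m / h ^ d) ^ ((p + 1) / 2)), ?_⟩
  rintro _ ⟨v, ⟨hv, rfl⟩, rfl⟩
  have := nonlinZ_le hp hh hv
  have := gradZ_nonneg hh.le v
  rw [energyZ]
  linarith

lemma Emin_le_energyZ (hp : 1 ≤ p) (hh : 0 < h) {v : ZLat d → ℂ} (hv : v ∈ ell2 d) :
    Emin d p h (massZ d h v) ≤ energyZ d p h v :=
  csInf_le (bddBelow_energyZ_image hp hh) ⟨v, ⟨hv, rfl⟩, rfl⟩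

lemma massZ_sqrt_div_smul {v : ZLat d → ℂ} (hv : 0 < massZ d h v) (hm : 0 ≤ m) :
    massZ d h (√(m / massZ d h v) • v) = m := by
  rw [massZ_smul, Real.sq_sqrt (by positivity), div_mul_cancel₀ _ hv.ne']

lemma massZ_single_zero : massZ d h (Pi.single 0 1) = h ^ d := by
  rw [massZ, tsum_eq_single 0 fun x hx => by simp [hx]]
  simp

lemma nonempty_ell2_massZ_eq (hh : 0 < h) (hm : 0 ≤ m) :
    {v ∈ ell2 d | massZ d h v = m}.Nonempty := by
  have hpos : 0 < massZ d h (Pi.single 0 1) := massZ_single_zero (d := d) ▸ pow_pos hh d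
  refine ⟨_, smul_mem_ell2 _ ?_, massZ_sqrt_div_smul hpos hm⟩
  exact summable_of_ne_finset_zero (s := {0}) fun x hx => by simp_all

lemma Emin_mul_le (hp : 1 ≤ p) (hh : 0 < h) (hm : 0 ≤ m) {θ : ℝ} (hθ : 1 ≤ θ) :
    Emin d p h (θ * m) ≤ θ ^ ((p + 1) / 2) * Emin d p h m := by
  have hθq : θ ≤ θ ^ ((p + 1) / 2) := by
    simpa using Real.rpow_le_rpow_of_exponent_le hθ (show 1 ≤ (p + 1) / 2 by linarith)
  have hq : 0 < θ ^ ((p + 1) / 2) := by positivity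
  rw [← div_le_iff₀' hq]
  refine le_csInf ((nonempty_ell2_massZ_eq hh hm).image _) ?_
  rintro _ ⟨v, ⟨hv, rfl⟩, rfl⟩
  have hsqrt : √θ ^ (p + 1) = θ ^ ((p + 1) / 2) := by
    rw [Real.sqrt_eq_rpow, ← Real.rpow_mul (by positivity)]
    ring_nf
  rw [div_le_iff₀' hq]
  calc Emin d p h (θ * massZ d h v) = Emin d p h (massZ d h (√θ • v)) := by
        rw [massZ_smul, Real.sq_sqrt (by positivity)]
    _ ≤ energyZ d p h (√θ • v) := Emin_le_energyZ hp hh (smul_mem_ell2 _ hv)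
    _ = θ * gradZ d h v - θ ^ ((p + 1) / 2) * nonlinZ d p h v := by
        rw [energyZ_smul (Real.sqrt_nonneg θ), Real.sq_sqrt (by positivity), hsqrt]
    _ ≤ θ ^ ((p + 1) / 2) * energyZ d p h v := by
        rw [energyZ]
        nlinarith [gradZ_nonneg hh.le v]

lemma Emin_neg_of_gradZ_lt (hp : 1 ≤ p) (hh : 0 < h) (hm : 0 < m) {v : ZLat d → ℂ}
    (hv : v ∈ ell2 d) (hM : 0 < massZ d h v)
    (hlt : gradZ d h v < (m / massZ d h v) ^ ((p - 1) / 2) * nonlinZ d p h v) :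
    Emin d p h m < 0 := by
  set a := √(m / massZ d h v)
  have ha : 0 < a := Real.sqrt_pos.2 (by positivity)
  have hpow : a ^ (p + 1) = a ^ 2 * (m / massZ d h v) ^ ((p - 1) / 2) := by
    rw [← Real.sq_sqrt (by positivity : 0 ≤ m / massZ d h v), ← Real.rpow_natCast,
      ← Real.rpow_mul ha.le, ← Real.rpow_add ha]
    ring_nf
  calc Emin d p h m = Emin d p h (massZ d h (a • v)) := by rw [massZ_sqrt_div_smul hM hm.le]
    _ ≤ energyZ d p h (a • v) := Emin_le_energyZ hp hh (smul_mem_ell2 _ hv)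
    _ = a ^ 2 * (gradZ d h v - (m / massZ d h v) ^ ((p - 1) / 2) * nonlinZ d p h v) := by
        rw [energyZ_smul ha.le, hpow]
        ring
    _ < 0 := mul_neg_of_pos_of_neg (by positivity) (by linarith)

lemma mul_Emin_lt_mul_Emin (hp : 1 < p) (hh : 0 < h) (hm : 0 < m) {M : ℝ} (hmM : m < M)
    (hneg : Emin d p h m < 0) : m * Emin d p h M < M * Emin d p h m := by
  have hθ : 1 < M / m := (one_lt_div hm).2 hmM
  have hθq : M / m < (M / m) ^ ((p + 1) / 2) := by
    simpa using Real.rpow_lt_rpow_of_exponent_lt hθ (show 1 < (p + 1) / 2 by linarith)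
  have hscale : Emin d p h M ≤ (M / m) ^ ((p + 1) / 2) * Emin d p h m := by
    simpa [div_mul_cancel₀ _ hm.ne'] using Emin_mul_le hp.le hh hm.le hθ.le
  calc m * Emin d p h M < m * (M / m * Emin d p h m) := by
        gcongr
        exact hscale.trans_lt (mul_lt_mul_of_neg_right hθq hneg)
    _ = M * Emin d p h m := by field_simp

end MinimalEnergy

section ProductSums

variable {ι κ R : Type*} [Fintype ι] [DecidableEq ι]

lemma prod_eq_zero_of_notMem_piFinset [CommMonoidWithZero R] {s : Finset κ} {g : ι → κ → R}
    (hg : ∀ i, ∀ k ∉ s, g i k = 0) {x : ι → κ} (hx : x ∉ Fintype.piFinset fun _ => s) :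
    ∏ i, g i (x i) = 0 := by
  obtain ⟨i, hi⟩ := not_forall.1 (Fintype.mem_piFinset.not.1 hx)
  exact prod_eq_zero (mem_univ i) (hg i _ hi)

lemma tsum_prod_eq_prod_sum [CommSemiring R] [TopologicalSpace R] (s : Finset κ) (g : ι → κ → R)
    (hg : ∀ i, ∀ k ∉ s, g i k = 0) :
    ∑' x : ι → κ, ∏ i, g i (x i) = ∏ i, ∑ k ∈ s, g i k := by
  rw [← sum_prod_piFinset]
  exact tsum_eq_sum fun x hx => prod_eq_zero_of_notMem_piFinset hg hx

end ProductSums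

section Gradient

variable {d : ℕ} {h : ℝ} {v : ZLat d → ℂ}

lemma summable_norm_shift_sub_sq (hv : v ∈ ell2 d) (e : ZLat d) :
    Summable fun x => ‖v (x + e) - v x‖ ^ 2 := by
  have hshift : Summable fun x => ‖v (x + e)‖ ^ 2 :=
    ((Equiv.addRight e).summable_iff (f := fun x => ‖v x‖ ^ 2)).2 hv
  refine ((hshift.add hv).mul_left 2).of_nonneg_of_le (fun _ => sq_nonneg _) fun x => ?_
  have := norm_sub_le (v (x + e)) (v x)
  nlinarith [norm_nonneg (v (x + e) - v x), sq_nonneg (‖v (x + e)‖ - ‖v x‖)]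

lemma gradZ_eq_tsum_forward (hv : v ∈ ell2 d) :
    gradZ d h v = h ^ d / h ^ 2 * ∑ i, ∑' x, ‖v (x + Pi.single i 1) - v x‖ ^ 2 := by
  have hback : ∀ e : ZLat d, Summable fun x => ‖v (x - e) - v x‖ ^ 2 := fun e => by
    simpa only [sub_eq_add_neg] using summable_norm_shift_sub_sq hv (-e)
  have hreindex : ∀ e : ZLat d,
      ∑' x, ‖v (x - e) - v x‖ ^ 2 = ∑' x, ‖v (x + e) - v x‖ ^ 2 := fun e => by
    rw [← (Equiv.addRight e).tsum_eq]
    simp only [Equiv.coe_addRight, add_sub_cancel_right, norm_sub_rev]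
  rw [gradZ, Summable.tsum_finsetSum fun i _ => (summable_norm_shift_sub_sq hv _).add (hback _),
    mul_sum, mul_sum]
  refine sum_congr rfl fun i _ => ?_
  rw [(summable_norm_shift_sub_sq hv _).tsum_add (hback _), hreindex]
  ring

end Gradient

def tensorPow (d : ℕ) (f : ℤ → ℝ) : ZLat d → ℂ := fun x => ((∏ i, f (x i) : ℝ) : ℂ)

section TensorPow

variable {d : ℕ} {p h : ℝ} {s : Finset ℤ} {f : ℤ → ℝ}

lemma norm_tensorPow (x : ZLat d) : ‖tensorPow d f x‖ = ∏ i, |f (x i)| := by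
  rw [tensorPow, Complex.norm_real, Real.norm_eq_abs, abs_prod]

lemma norm_tensorPow_sq (x : ZLat d) : ‖tensorPow d f x‖ ^ 2 = ∏ i, f (x i) ^ 2 := by
  simp only [norm_tensorPow, ← prod_pow, sq_abs]

lemma tensorPow_mem_ell2 (hf : ∀ k ∉ s, f k = 0) : tensorPow d f ∈ ell2 d := by
  refine summable_of_ne_finset_zero (s := Fintype.piFinset fun _ => s) fun x hx => ?_
  rw [norm_tensorPow_sq]
  exact prod_eq_zero_of_notMem_piFinset (g := fun _ k => f k ^ 2)
    (fun _ k hk => by rw [hf k hk, zero_pow two_ne_zero]) hx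

lemma massZ_tensorPow (hf : ∀ k ∉ s, f k = 0) :
    massZ d h (tensorPow d f) = h ^ d * (∑ k ∈ s, f k ^ 2) ^ d := by
  simp only [massZ, norm_tensorPow_sq]
  rw [tsum_prod_eq_prod_sum s (fun _ k => f k ^ 2)
    fun _ k hk => by rw [hf k hk, zero_pow two_ne_zero], prod_const, card_univ, Fintype.card_fin]

lemma nonlinZ_tensorPow (hp : p + 1 ≠ 0) (hf : ∀ k ∉ s, f k = 0) :
    nonlinZ d p h (tensorPow d f) = h ^ d / (p + 1) * (∑ k ∈ s, |f k| ^ (p + 1)) ^ d := by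
  simp only [nonlinZ, norm_tensorPow,
    ← Real.finsetProd_rpow _ _ fun i _ => abs_nonneg (f _)]
  rw [tsum_prod_eq_prod_sum s (fun _ k => |f k| ^ (p + 1))
    fun _ k hk => by rw [hf k hk, abs_zero, Real.zero_rpow hp], prod_const, card_univ,
    Fintype.card_fin]

lemma norm_tensorPow_add_single_sub_sq (x : ZLat d) (i : Fin d) :
    ‖tensorPow d f (x + Pi.single i 1) - tensorPow d f x‖ ^ 2 =
      ∏ j, (if j = i then (f (x j + 1) - f (x j)) ^ 2 else f (x j) ^ 2) := by
  have hcompl : ∀ j ∈ ({i}ᶜ : Finset (Fin d)),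
      f ((x + Pi.single i 1 : ZLat d) j) = f (x j) := by
    intro j hj
    rw [Pi.add_apply, Pi.single_eq_of_ne (by simpa using hj), add_zero]
  rw [tensorPow, tensorPow, ← Complex.ofReal_sub, Complex.norm_real, Real.norm_eq_abs, sq_abs,
    Fintype.prod_eq_mul_prod_compl i, Fintype.prod_eq_mul_prod_compl i (fun j => f (x j)),
    Fintype.prod_eq_mul_prod_compl i, prod_congr rfl hcompl, if_pos rfl,
    prod_congr rfl fun j hj => if_neg (by simpa using hj), prod_pow]
  simp only [Pi.add_apply, Pi.single_eq_same]
  ring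

lemma gradZ_tensorPow (hf : ∀ k ∉ s, f k = 0) (hf' : ∀ k ∉ s, f (k + 1) = 0) :
    gradZ d h (tensorPow d f) =
      h ^ d / h ^ 2 * (d * ((∑ k ∈ s, (f (k + 1) - f k) ^ 2) * (∑ k ∈ s, f k ^ 2) ^ (d - 1))) := by
  have hline : ∀ i : Fin d, ∑' x, ‖tensorPow d f (x + Pi.single i 1) - tensorPow d f x‖ ^ 2 =
      (∑ k ∈ s, (f (k + 1) - f k) ^ 2) * (∑ k ∈ s, f k ^ 2) ^ (d - 1) := by
    intro i
    simp only [norm_tensorPow_add_single_sub_sq]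
    rw [tsum_prod_eq_prod_sum s
      (fun j k => if j = i then (f (k + 1) - f k) ^ 2 else f k ^ 2)
      fun j k hk => by split_ifs <;> simp [hf k hk, hf' k hk],
      Fintype.prod_eq_mul_prod_compl i]
    simp only [↓reduceIte]
    rw [prod_congr rfl fun j hj => sum_congr rfl fun k _ => if_neg (by simpa using hj),
      prod_const, card_compl, Fintype.card_fin, card_singleton]
  rw [gradZ_eq_tsum_forward (tensorPow_mem_ell2 hf), sum_congr rfl fun i _ => hline i,
    sum_const, card_univ, Fintype.card_fin, nsmul_eq_mul]

end TensorPow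

def tent (L : ℕ) (k : ℤ) : ℝ := max (1 - |(k : ℝ)| / L) 0

section Tent

variable {L : ℕ}

lemma tent_nonneg (k : ℤ) : 0 ≤ tent L k := le_max_right _ _

lemma tent_le_one (k : ℤ) : tent L k ≤ 1 :=
  max_le (sub_le_self _ (by positivity)) zero_le_one

lemma tent_zero : tent L 0 = 1 := by simp [tent]

lemma tent_eq_zero (hL : 0 < L) {k : ℤ} (hk : (L : ℤ) ≤ |k|) : tent L k = 0 := by
  have hk' : (L : ℝ) ≤ |(k : ℝ)| := by exact_mod_cast hk
  rw [tent, max_eq_right]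
  rwa [sub_nonpos, one_le_div (by positivity)]

lemma tent_eq_zero_of_notMem (hL : 0 < L) {k : ℤ} (hk : k ∉ Icc (-(L : ℤ)) L) :
    tent L k = 0 :=
  tent_eq_zero hL (by rw [mem_Icc] at hk; rcases le_or_gt 0 k with h | h <;>
    [rw [abs_of_nonneg h]; rw [abs_of_neg h]] <;> omega)

lemma tent_add_one_eq_zero_of_notMem (hL : 0 < L) {k : ℤ} (hk : k ∉ Icc (-(L : ℤ)) L) :
    tent L (k + 1) = 0 :=
  tent_eq_zero hL (by rw [mem_Icc] at hk; rcases le_or_gt 0 (k + 1) with h | h <;>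
    [rw [abs_of_nonneg h]; rw [abs_of_neg h]] <;> omega)

lemma abs_tent_add_one_sub_le (k : ℤ) : |tent L (k + 1) - tent L k| ≤ 1 / L := by
  refine (abs_max_sub_max_le_abs _ _ _).trans ?_
  have hstep : |(|((k + 1 : ℤ) : ℝ)| - |(k : ℝ)|)| ≤ 1 := by
    refine (abs_abs_sub_abs_le_abs_sub _ _).trans ?_
    push_cast
    simp
  rw [sub_sub_sub_cancel_left, ← sub_div, abs_div, Nat.abs_cast, abs_sub_comm]
  gcongr

lemma half_le_tent {k : ℤ} (hk : 2 * |k| ≤ L) : 1 / 2 ≤ tent L k := by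
  rcases Nat.eq_zero_or_pos L with rfl | hL
  · obtain rfl : k = 0 := abs_eq_zero.1 (by push_cast at hk; linarith [abs_nonneg k])
    norm_num [tent_zero]
  have hk' : 2 * |(k : ℝ)| ≤ L := by exact_mod_cast hk
  refine le_max_of_le_left ?_
  rw [le_sub_comm, div_le_iff₀ (by positivity)]
  linarith

lemma card_Icc_neg_self : #(Icc (-(L : ℤ)) L) = 2 * L + 1 := by
  rw [Int.card_Icc]
  omega

lemma sum_tent_sq_pos : 0 < ∑ k ∈ Icc (-(L : ℤ)) L, tent L k ^ 2 :=
  sum_pos' (fun k _ => sq_nonneg _) ⟨0, by simp, by simp [tent_zero]⟩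

lemma sum_tent_sq_le (hL : 1 ≤ L) : ∑ k ∈ Icc (-(L : ℤ)) L, tent L k ^ 2 ≤ 3 * L := by
  calc ∑ k ∈ Icc (-(L : ℤ)) L, tent L k ^ 2 ≤ #(Icc (-(L : ℤ)) L) • (1 : ℝ) :=
        sum_le_card_nsmul _ _ _ fun k _ => pow_le_one₀ (tent_nonneg k) (tent_le_one k)
    _ ≤ 3 * L := by
        rw [card_Icc_neg_self, nsmul_one]
        push_cast
        exact_mod_cast (by omega : 2 * L + 1 ≤ 3 * L)

lemma sum_sq_tent_add_one_sub_le (hL : 1 ≤ L) :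
    ∑ k ∈ Icc (-(L : ℤ)) L, (tent L (k + 1) - tent L k) ^ 2 ≤ 3 / L := by
  have hL' : (1 : ℝ) ≤ L := by exact_mod_cast hL
  calc ∑ k ∈ Icc (-(L : ℤ)) L, (tent L (k + 1) - tent L k) ^ 2
        ≤ #(Icc (-(L : ℤ)) L) • (1 / (L : ℝ)) ^ 2 := by
        refine sum_le_card_nsmul _ _ _ fun k _ => ?_
        rw [← sq_abs]
        exact pow_le_pow_left₀ (abs_nonneg _) (abs_tent_add_one_sub_le k) 2
    _ ≤ 3 / L := by
        rw [card_Icc_neg_self, nsmul_eq_mul]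
        push_cast
        rw [div_pow, one_pow, ← div_eq_mul_one_div,
          div_le_div_iff₀ (by positivity) (by positivity)]
        nlinarith

lemma le_sum_tent_rpow {q : ℝ} (hq : 0 ≤ q) :
    (1 / 2) ^ q * L ≤ ∑ k ∈ Icc (-(L : ℤ)) L, tent L k ^ q := by
  set t := Icc (-((L : ℤ) / 2)) ((L : ℤ) / 2)
  have hcard : (L : ℝ) ≤ #t := by
    have : L ≤ #t := by rw [Int.card_Icc]; omega
    exact_mod_cast this
  calc (1 / 2) ^ q * L ≤ #t • (1 / 2 : ℝ) ^ q := by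
        rw [nsmul_eq_mul, mul_comm]
        gcongr
    _ ≤ ∑ k ∈ t, tent L k ^ q := by
        refine card_nsmul_le_sum _ _ _ fun k hk => ?_
        refine Real.rpow_le_rpow (by norm_num) (half_le_tent ?_) hq
        rw [mem_Icc] at hk
        rcases le_or_gt 0 k with h | h <;> [rw [abs_of_nonneg h]; rw [abs_of_neg h]] <;> omega
    _ ≤ ∑ k ∈ Icc (-(L : ℤ)) L, tent L k ^ q :=
        sum_le_sum_of_subset_of_nonneg (Icc_subset_Icc (by omega) (by omega))
          fun k _ _ => Real.rpow_nonneg (tent_nonneg k) q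

end Tent

section TentProfile

variable {d L : ℕ} {p h : ℝ}

lemma massZ_tensorPow_tent (hL : 0 < L) :
    massZ d h (tensorPow d (tent L)) = h ^ d * (∑ k ∈ Icc (-(L : ℤ)) L, tent L k ^ 2) ^ d :=
  massZ_tensorPow fun _ => tent_eq_zero_of_notMem hL

lemma massZ_tensorPow_tent_pos (hh : 0 < h) (hL : 0 < L) :
    0 < massZ d h (tensorPow d (tent L)) := by
  rw [massZ_tensorPow_tent hL]
  exact mul_pos (pow_pos hh d) (pow_pos sum_tent_sq_pos d)

lemma massZ_tensorPow_tent_le (hh : 0 ≤ h) (hL : 1 ≤ L) :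
    massZ d h (tensorPow d (tent L)) ≤ h ^ d * (3 * L) ^ d := by
  rw [massZ_tensorPow_tent hL]
  gcongr
  exact sum_tent_sq_le hL

lemma gradZ_tensorPow_tent_le (hd : 1 ≤ d) (hh : 0 ≤ h) (hL : 1 ≤ L) :
    gradZ d h (tensorPow d (tent L)) ≤ h ^ d / h ^ 2 * d * 3 ^ d * L ^ d / L ^ 2 := by
  rw [gradZ_tensorPow (fun _ => tent_eq_zero_of_notMem hL)
    (fun _ => tent_add_one_eq_zero_of_notMem hL)]
  obtain ⟨n, rfl⟩ : ∃ n, d = n + 1 := ⟨d - 1, by omega⟩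
  calc _ ≤ h ^ (n + 1) / h ^ 2 * ((n + 1 : ℕ) * (3 / L * (3 * L) ^ n)) := by
        rw [Nat.add_sub_cancel]
        gcongr
        · exact sum_sq_tent_add_one_sub_le hL
        · exact sum_tent_sq_le hL
    _ = h ^ (n + 1) / h ^ 2 * (n + 1 : ℕ) * 3 ^ (n + 1) * L ^ (n + 1) / L ^ 2 := by
        have : (L : ℝ) ≠ 0 := by positivity
        field_simp
        ring

lemma le_nonlinZ_tensorPow_tent (hp : 0 < p + 1) (hh : 0 ≤ h) (hL : 0 < L) :
    h ^ d / (p + 1) * ((1 / 2) ^ (p + 1) * L) ^ d ≤ nonlinZ d p h (tensorPow d (tent L)) := by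
  rw [nonlinZ_tensorPow hp.ne' fun _ => tent_eq_zero_of_notMem hL]
  simp only [abs_of_nonneg (tent_nonneg _)]
  gcongr
  exact le_sum_tent_rpow hp.le

end TentProfile

lemma Emin_neg {d : ℕ} {p h m : ℝ} (hd : 1 ≤ d) (hp : 1 < p) (hp' : p < 1 + 4 / d)
    (hh : 0 < h) (hm : 0 < m) : Emin d p h m < 0 := by
  set r := (p - 1) / 2 with hr
  have hε : 0 < 2 - d * r := by
    have : (d : ℝ) * (p - 1) < 4 := (lt_div_iff₀' (by positivity)).1 (by linarith)
    rw [hr]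
    linarith
  -- `gradZ ≤ C₁ L^(d-2)` and `(m / massZ)^r * nonlinZ ≥ C₂ L^(d-dr)`: take `L` large.
  set X := m / (h ^ d * 3 ^ d)
  set C₁ := h ^ d / h ^ 2 * d * 3 ^ d
  set C₂ := X ^ r * (h ^ d / (p + 1) * ((1 / 2) ^ (p + 1)) ^ d)
  have hC₂ : 0 < C₂ := by positivity
  obtain ⟨L, hLε, hL⟩ := ((((tendsto_rpow_atTop hε).comp tendsto_natCast_atTop_atTop)
    |>.eventually_gt_atTop (C₁ / C₂)).and (eventually_ge_atTop 1)).exists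
  have hL0 : (0 : ℝ) < L := by exact_mod_cast hL
  have hC : C₁ < C₂ * L ^ (2 - d * r) := (div_lt_iff₀' hC₂).1 hLε
  set v := tensorPow d (tent L)
  refine Emin_neg_of_gradZ_lt hp.le hh hm (tensorPow_mem_ell2 fun _ => tent_eq_zero_of_notMem hL)
    (massZ_tensorPow_tent_pos hh hL) ?_
  calc gradZ d h v ≤ C₁ * L ^ d / L ^ 2 := gradZ_tensorPow_tent_le hd hh.le hL
    _ < C₂ * L ^ (2 - d * r) * L ^ d / L ^ 2 := by gcongr
    _ = (X / L ^ d) ^ r * (h ^ d / (p + 1) * ((1 / 2) ^ (p + 1) * L) ^ d) := by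
        rw [Real.div_rpow (by positivity) (by positivity), ← Real.rpow_natCast_mul hL0.le,
          Real.rpow_sub hL0, Real.rpow_two, mul_pow]
        simp only [C₂]
        field_simp
    _ ≤ (m / massZ d h v) ^ r * nonlinZ d p h v := by
        have hX : X / L ^ d ≤ m / massZ d h v := by
          rw [div_div, mul_assoc, ← mul_pow]
          exact div_le_div_of_nonneg_left hm.le (massZ_tensorPow_tent_pos hh hL)
            (massZ_tensorPow_tent_le hh.le hL)
        exact mul_le_mul (Real.rpow_le_rpow (by positivity) hX (by linarith))
          (le_nonlinZ_tensorPow_tent (by linarith) hh.le hL) (by positivity)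
          (Real.rpow_nonneg (div_nonneg hm.le (massZ_tensorPow_tent_pos hh hL).le) _)

/-- strict subadditivity of `E_min` in the mass-subcritical regime. -/
theorem strict_subadditivity_Emin (d : ℕ) (hd : 1 ≤ d) (p h : ℝ) (hp : 1 < p)
    (hp' : p < 1 + 4 / (d : ℝ)) (hh : 0 < h) (m m' : ℝ) (hm : 0 < m) (hm' : 0 < m') :
    Emin d p h (m + m') < Emin d p h m + Emin d p h m' := by
  have h₁ := mul_Emin_lt_mul_Emin hp hh hm (lt_add_of_pos_right m hm')
    (Emin_neg hd hp hp' hh hm)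
  have h₂ := mul_Emin_lt_mul_Emin hp hh hm' (lt_add_of_pos_left m' hm)
    (Emin_neg hd hp hp' hh hm')
  have hsum : (m + m') * Emin d p h (m + m') < (m + m') * (Emin d p h m + Emin d p h m') := by
    linarith
  exact lt_of_mul_lt_mul_left hsum (by positivity)
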